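/- (Completeness of optimal disentangled representations.) Let V, T be random variables, and let V_S = f_S(V), V_X = f_X(V) be deterministic functions of V and T_S = g_S(T), T_X = g_X(T) be deterministic functions of T. Suppose the optimality conditions hold: I(T;V_S) = I(V;T), I(V;V_S|T) = 0, I(V;V_X|T) = H(V|T), I(T;V_X) = 0, and symmetrically I(V;T_S) = I(V;T), I(T;T_S|V) = 0, I(T;T_X|V) = H(T|V), I(V;T_X) = 0. Then the joint representations F_V = (V_S, V_X) and F_T = (T_S, T_X) are sufficient: I(V; F_V) = H(V) and I(T; F_T) = H(T). -/

import Mathlib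

/-!
As `F_V = (V_S, V_X)` is a function of `V`, the claim `I(V; F_V) = H(V)` says that
`H(V | F_V) = 0`. Split `H(V | F_V) = H(V | T, F_V) + I(T; V | F_V)`. The first term is at most
`H(V | V_X, T)`, which vanishes by maximality of `V_X`. The second is
`H(T | F_V) - H(T | V) ≤ H(T | V_S) - H(T | V)`, which vanishes by invariance of `V_S`.
Exchanging `V` and `T` gives the claim for `T`.
-/

open MeasureTheory ProbabilityTheory

namespace DisNCL

variable {Ω : Type*} [MeasurableSpace Ω]

/-- The probability that a random variable `X` takes the value `x`. -/
noncomputable def pr {S : Type*} (μ : Measure Ω) (X : Ω → S) (x : S) : ℝ :=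
  (μ {ω | X ω = x}).toReal

/-- Shannon entropy `H(X)` of a finitely-valued random variable. -/
noncomputable def H {S : Type*} [Fintype S] (μ : Measure Ω) (X : Ω → S) : ℝ :=
  -∑ x, pr μ X x * Real.log (pr μ X x)

/-- Conditional entropy `H(X | Y) = ∑ y P(Y = y) H(X | Y = y)`, where the inner entropy
is taken under the conditional measure given `Y = y`. -/
noncomputable def condH {S T : Type*} [Fintype S] [Fintype T]
    (μ : Measure Ω) (X : Ω → S) (Y : Ω → T) : ℝ :=
  ∑ y, pr μ Y y * H (ProbabilityTheory.cond μ {ω | Y ω = y}) X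

/-- Mutual information `I(X;Y) = H(X) + H(Y) - H(X,Y)`. -/
noncomputable def MI {S T : Type*} [Fintype S] [Fintype T]
    (μ : Measure Ω) (X : Ω → S) (Y : Ω → T) : ℝ :=
  H μ X + H μ Y - H μ (fun ω => (X ω, Y ω))

/-- Conditional mutual information `I(X;Y|Z) = ∑ z P(Z = z) I(X;Y | Z = z)`, where the
inner mutual information is taken under the conditional measure given `Z = z`. -/
noncomputable def CMI {S T U : Type*} [Fintype S] [Fintype T] [Fintype U]
    (μ : Measure Ω) (X : Ω → S) (Y : Ω → T) (Z : Ω → U) : ℝ :=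
  ∑ z, pr μ Z z * MI (ProbabilityTheory.cond μ {ω | Z ω = z}) X Y

/-- `X` and `Y` are conditionally independent given `Z`
(written `X ⊥ Y | Z`): for all values,
`P(X = x, Y = y, Z = z) ⬝ P(Z = z) = P(X = x, Z = z) ⬝ P(Y = y, Z = z)`. -/
def CondIndep {S T U : Type*} (μ : Measure Ω) (X : Ω → S) (Y : Ω → T) (Z : Ω → U) : Prop :=
  ∀ (x : S) (y : T) (z : U),
    pr μ (fun ω => (X ω, Y ω, Z ω)) (x, y, z) * pr μ Z z =
      pr μ (fun ω => (X ω, Z ω)) (x, z) * pr μ (fun ω => (Y ω, Z ω)) (y, z)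

section

variable {S T U T' : Type*}

lemma mul_log_div_le_sub {p q : ℝ} (hp : 0 ≤ p) (hq : 0 ≤ q) (hpq : q = 0 → p = 0) :
    p * Real.log (q / p) ≤ q - p := by
  rcases hp.eq_or_lt with rfl | hp
  · simpa using hq
  have hq : 0 < q := hq.lt_of_ne fun h => hp.ne' (hpq h.symm)
  calc p * Real.log (q / p) ≤ p * (q / p - 1) := by
        gcongr
        exact Real.log_le_sub_one_of_pos (by positivity)
    _ = q - p := by field_simp

lemma sum_mul_log_div_le {ι : Type*} [Fintype ι] {p q : ι → ℝ} (hp : ∀ i, 0 ≤ p i)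
    (hq : ∀ i, 0 ≤ q i) (hpq : ∀ i, q i = 0 → p i = 0) :
    ∑ i, p i * Real.log (q i / p i) ≤ ∑ i, q i - ∑ i, p i := by
  rw [← Finset.sum_sub_distrib]
  exact Finset.sum_le_sum fun i _ => mul_log_div_le_sub (hp i) (hq i) (hpq i)

def FiberMeasurable (X : Ω → S) : Prop :=
  ∀ x, MeasurableSet {ω | X ω = x}

lemma setOf_prodMk_eq {α : Type*} (X : α → S) (Y : α → T) (x : S) (y : T) :
    {a | (X a, Y a) = (x, y)} = {a | X a = x} ∩ {a | Y a = y} := by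
  ext a
  simp [Prod.ext_iff]

lemma fiberMeasurable_of_measurable [MeasurableSpace S] [MeasurableSingletonClass S]
    {X : Ω → S} (hX : Measurable X) : FiberMeasurable X :=
  fun x => hX (measurableSet_singleton x)

namespace FiberMeasurable

variable {X : Ω → S} {Y : Ω → T}

lemma prodMk (hX : FiberMeasurable X) (hY : FiberMeasurable Y) :
    FiberMeasurable (fun ω => (X ω, Y ω)) := fun ⟨x, y⟩ => by
  rw [setOf_prodMk_eq]
  exact (hX x).inter (hY y)

lemma comp [Finite S] (hX : FiberMeasurable X) (g : S → T) :
    FiberMeasurable (fun ω => g (X ω)) := fun y => by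
  have h : {ω | g (X ω) = y} = ⋃ x ∈ {x | g x = y}, {ω | X ω = x} := by
    ext ω
    simp
  rw [h]
  exact MeasurableSet.biUnion (Set.toFinite _).countable fun x _ => hX x

end FiberMeasurable

variable (μ : Measure Ω) {X : Ω → S} {Y : Ω → T} {Z : Ω → U}

lemma pr_nonneg (X : Ω → S) (x : S) : 0 ≤ pr μ X x :=
  ENNReal.toReal_nonneg

lemma pr_le_one [IsZeroOrProbabilityMeasure μ] (X : Ω → S) (x : S) : pr μ X x ≤ 1 :=
  measureReal_le_one

lemma pr_prodMk_comm (X : Ω → S) (Y : Ω → T) (x : S) (y : T) :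
    pr μ (fun ω => (X ω, Y ω)) (x, y) = pr μ (fun ω => (Y ω, X ω)) (y, x) := by
  rw [pr, pr, setOf_prodMk_eq, setOf_prodMk_eq, Set.inter_comm]

lemma pr_prodMk_le_left [IsFiniteMeasure μ] (X : Ω → S) (Y : Ω → T) (x : S) (y : T) :
    pr μ (fun ω => (X ω, Y ω)) (x, y) ≤ pr μ X x := by
  rw [pr, setOf_prodMk_eq]
  exact measureReal_mono Set.inter_subset_left

lemma pr_prodMk_le_right [IsFiniteMeasure μ] (X : Ω → S) (Y : Ω → T) (x : S) (y : T) :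
    pr μ (fun ω => (X ω, Y ω)) (x, y) ≤ pr μ Y y := by
  rw [pr_prodMk_comm]
  exact pr_prodMk_le_left μ Y X y x

lemma sum_pr [Fintype S] [IsFiniteMeasure μ] (hX : FiberMeasurable X) :
    ∑ x, pr μ X x = μ.real Set.univ := by
  have h := sum_measureReal_preimage_singleton (μ := μ) Finset.univ fun x _ => hX x
  rwa [Finset.coe_univ, Set.preimage_univ] at h

lemma sum_pr_prodMk_right [Fintype T] [IsFiniteMeasure μ] (X : Ω → S) (hY : FiberMeasurable Y)
    (x : S) : ∑ y, pr μ (fun ω => (X ω, Y ω)) (x, y) = pr μ X x := by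
  have h : ∀ y, pr μ (fun ω => (X ω, Y ω)) (x, y) = pr (μ.restrict {ω | X ω = x}) Y y :=
    fun y => by rw [pr, pr, Measure.restrict_apply (hY y), setOf_prodMk_eq, Set.inter_comm]
  simp_rw [h]
  rw [sum_pr _ hY]
  exact measureReal_restrict_apply_univ _

lemma sum_pr_prodMk_left [Fintype S] [IsFiniteMeasure μ] (hX : FiberMeasurable X)
    (Y : Ω → T) (y : T) : ∑ x, pr μ (fun ω => (X ω, Y ω)) (x, y) = pr μ Y y := by
  simp_rw [pr_prodMk_comm μ X Y]
  exact sum_pr_prodMk_right μ Y hX y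

lemma sum_pr_prodMk_mul_left [Fintype S] [Fintype T] [IsFiniteMeasure μ] (X : Ω → S)
    (hY : FiberMeasurable Y) (f : S → ℝ) :
    ∑ p, pr μ (fun ω => (X ω, Y ω)) p * f p.1 = ∑ x, pr μ X x * f x := by
  simp_rw [Fintype.sum_prod_type, ← Finset.sum_mul, sum_pr_prodMk_right μ X hY]

lemma sum_pr_prodMk_mul_right [Fintype S] [Fintype T] [IsFiniteMeasure μ]
    (hX : FiberMeasurable X) (Y : Ω → T) (f : T → ℝ) :
    ∑ p, pr μ (fun ω => (X ω, Y ω)) p * f p.2 = ∑ y, pr μ Y y * f y := by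
  simp_rw [Fintype.sum_prod_type_right, ← Finset.sum_mul, sum_pr_prodMk_left μ hX Y]

lemma pr_mul_pr_cond [IsFiniteMeasure μ] (X : Ω → S) (hY : FiberMeasurable Y) (x : S) (y : T) :
    pr μ Y y * pr μ[|{ω | Y ω = y}] X x = pr μ (fun ω => (X ω, Y ω)) (x, y) := by
  rw [pr, pr, pr, ← ENNReal.toReal_mul, mul_comm, cond_mul_eq_inter (hY y), setOf_prodMk_eq,
    Set.inter_comm]

lemma H_eq_sum_negMulLog [Fintype S] (X : Ω → S) :
    H μ X = ∑ x, Real.negMulLog (pr μ X x) := by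
  simp only [H, Real.negMulLog, neg_mul, Finset.sum_neg_distrib]

lemma H_nonneg [Fintype S] [IsZeroOrProbabilityMeasure μ] (X : Ω → S) : 0 ≤ H μ X := by
  rw [H_eq_sum_negMulLog]
  exact Finset.sum_nonneg fun x _ => Real.negMulLog_nonneg (pr_nonneg μ X x) (pr_le_one μ X x)

lemma condH_nonneg [Fintype S] [Fintype T] (X : Ω → S) (Y : Ω → T) : 0 ≤ condH μ X Y :=
  Finset.sum_nonneg fun y _ => mul_nonneg (pr_nonneg μ Y y) (H_nonneg _ X)

lemma H_prodMk_comm [Fintype S] [Fintype T] (X : Ω → S) (Y : Ω → T) :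
    H μ (fun ω => (X ω, Y ω)) = H μ (fun ω => (Y ω, X ω)) := by
  simp only [H_eq_sum_negMulLog]
  exact Fintype.sum_equiv (Equiv.prodComm S T) _ _ fun ⟨x, y⟩ => by
    rw [Equiv.prodComm_apply, Prod.swap_prod_mk, pr_prodMk_comm]

lemma H_prodMk [Fintype S] [Fintype T] [IsFiniteMeasure μ] (hX : FiberMeasurable X)
    (hY : FiberMeasurable Y) : H μ (fun ω => (X ω, Y ω)) = H μ Y + condH μ X Y := by
  have hterm : ∀ p : S × T, Real.negMulLog (pr μ (fun ω => (X ω, Y ω)) p) =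
      pr μ (fun ω => (X ω, Y ω)) p * -Real.log (pr μ Y p.2) +
        pr μ Y p.2 * Real.negMulLog (pr μ[|{ω | Y ω = p.2}] X p.1) := fun ⟨x, y⟩ => by
    rw [← pr_mul_pr_cond μ X hY x y, Real.negMulLog_mul, Real.negMulLog]
    ring
  rw [H_eq_sum_negMulLog, Finset.sum_congr rfl fun p _ => hterm p, Finset.sum_add_distrib,
    sum_pr_prodMk_mul_right μ hX Y (fun y => -Real.log (pr μ Y y)), Fintype.sum_prod_type_right,
    H_eq_sum_negMulLog]
  simp only [condH, H_eq_sum_negMulLog, Real.negMulLog, Finset.mul_sum, neg_mul, mul_neg]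

lemma MI_eq_H_sub_condH [Fintype S] [Fintype T] [IsFiniteMeasure μ] (hX : FiberMeasurable X)
    (hY : FiberMeasurable Y) : MI μ X Y = H μ X - condH μ X Y := by
  rw [MI, H_prodMk μ hX hY]
  ring

lemma MI_comm [Fintype S] [Fintype T] (X : Ω → S) (Y : Ω → T) : MI μ X Y = MI μ Y X := by
  rw [MI, MI, H_prodMk_comm]
  ring

lemma MI_eq_neg_sum_mul_log_div [Fintype S] [Fintype T] [IsFiniteMeasure μ]
    (hX : FiberMeasurable X) (hY : FiberMeasurable Y) :
    MI μ X Y = -∑ p : S × T, pr μ (fun ω => (X ω, Y ω)) p *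
      Real.log (pr μ X p.1 * pr μ Y p.2 / pr μ (fun ω => (X ω, Y ω)) p) := by
  set P := pr μ (fun ω => (X ω, Y ω))
  have hlog : ∀ p : S × T, P p * Real.log (pr μ X p.1 * pr μ Y p.2 / P p) =
      P p * Real.log (pr μ X p.1) + P p * Real.log (pr μ Y p.2) - P p * Real.log (P p) := by
    intro p
    rcases (pr_nonneg μ (fun ω => (X ω, Y ω)) p).eq_or_lt with hP | hP
    · simp [P, ← hP]
    have hx := hP.trans_le (pr_prodMk_le_left μ X Y p.1 p.2)
    have hy := hP.trans_le (pr_prodMk_le_right μ X Y p.1 p.2)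
    rw [Real.log_div (mul_pos hx hy).ne' hP.ne', Real.log_mul hx.ne' hy.ne']
    ring
  have hHX : H μ X = -∑ p, P p * Real.log (pr μ X p.1) :=
    congrArg Neg.neg (sum_pr_prodMk_mul_left μ X hY _).symm
  have hHY : H μ Y = -∑ p, P p * Real.log (pr μ Y p.2) :=
    congrArg Neg.neg (sum_pr_prodMk_mul_right μ hX Y _).symm
  have hHXY : H μ (fun ω => (X ω, Y ω)) = -∑ p, P p * Real.log (P p) := rfl
  rw [MI, hHX, hHY, hHXY, Finset.sum_congr rfl fun p _ => hlog p, Finset.sum_sub_distrib,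
    Finset.sum_add_distrib]
  ring

lemma MI_nonneg [Fintype S] [Fintype T] [IsZeroOrProbabilityMeasure μ] (hX : FiberMeasurable X)
    (hY : FiberMeasurable Y) : 0 ≤ MI μ X Y := by
  have hPQ : ∀ p : S × T,
      pr μ X p.1 * pr μ Y p.2 = 0 → pr μ (fun ω => (X ω, Y ω)) p = 0 :=
    fun ⟨x, y⟩ h => (mul_eq_zero.mp h).elim
      (fun h => le_antisymm (h ▸ pr_prodMk_le_left μ X Y x y) (pr_nonneg _ _ _))
      (fun h => le_antisymm (h ▸ pr_prodMk_le_right μ X Y x y) (pr_nonneg _ _ _))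
  have hgibbs := sum_mul_log_div_le (pr_nonneg μ _)
    (fun p : S × T => mul_nonneg (pr_nonneg μ X p.1) (pr_nonneg μ Y p.2)) hPQ
  have hsumQ : ∑ p : S × T, pr μ X p.1 * pr μ Y p.2 = μ.real Set.univ * μ.real Set.univ := by
    rw [Fintype.sum_prod_type, ← Finset.sum_mul_sum, sum_pr μ hX, sum_pr μ hY]
  rw [hsumQ, sum_pr μ (hX.prodMk hY)] at hgibbs
  rw [MI_eq_neg_sum_mul_log_div μ hX hY]
  nlinarith [measureReal_nonneg (μ := μ) (s := Set.univ),
    measureReal_le_one (μ := μ) (s := Set.univ)]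

lemma CMI_comm [Fintype S] [Fintype T] [Fintype U] (X : Ω → S) (Y : Ω → T) (Z : Ω → U) :
    CMI μ X Y Z = CMI μ Y X Z := by
  simp only [CMI, MI_comm _ X Y]

lemma CMI_nonneg [Fintype S] [Fintype T] [Fintype U] (hX : FiberMeasurable X)
    (hY : FiberMeasurable Y) (Z : Ω → U) : 0 ≤ CMI μ X Y Z :=
  Finset.sum_nonneg fun z _ => mul_nonneg (pr_nonneg μ Z z) (MI_nonneg _ hX hY)

lemma sum_pr_mul_condH_cond [Fintype S] [Fintype T] [Fintype U] [IsFiniteMeasure μ]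
    (X : Ω → S) (hY : FiberMeasurable Y) (hZ : FiberMeasurable Z) :
    ∑ z, pr μ Z z * condH μ[|{ω | Z ω = z}] X Y = condH μ X (fun ω => (Y ω, Z ω)) := by
  rw [condH, Fintype.sum_prod_type_right]
  refine Finset.sum_congr rfl fun z _ => ?_
  rw [condH, Finset.mul_sum]
  refine Finset.sum_congr rfl fun y _ => ?_
  rw [← mul_assoc, pr_mul_pr_cond μ Y hZ, cond_cond_eq_cond_inter (hZ z) (hY y), setOf_prodMk_eq,
    Set.inter_comm {ω | Z ω = z}]

lemma CMI_eq_condH_sub_condH [Fintype S] [Fintype T] [Fintype U] [IsFiniteMeasure μ]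
    (hX : FiberMeasurable X) (hY : FiberMeasurable Y) (hZ : FiberMeasurable Z) :
    CMI μ X Y Z = condH μ X Z - condH μ X (fun ω => (Y ω, Z ω)) := by
  rw [CMI, ← sum_pr_mul_condH_cond μ X hY hZ, condH, ← Finset.sum_sub_distrib]
  refine Finset.sum_congr rfl fun z _ => ?_
  rw [MI_eq_H_sub_condH _ hX hY, mul_sub]

lemma condH_comp_of_injective [Fintype S] [Fintype T] [Fintype T'] (X : Ω → S) (Y : Ω → T)
    {e : T → T'} (he : Function.Injective e) :
    condH μ X (fun ω => e (Y ω)) = condH μ X Y := by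
  refine (Fintype.sum_of_injective e he _ _ (fun y' hy' => ?_) fun y => ?_).symm
  · have hempty : {ω | e (Y ω) = y'} = ∅ :=
      Set.eq_empty_of_forall_notMem fun ω h => hy' ⟨Y ω, h⟩
    simp [pr, hempty]
  · simp only [pr, he.eq_iff]

lemma condH_le_condH_comp [Fintype S] [Fintype T] [Fintype T'] [IsFiniteMeasure μ]
    (hX : FiberMeasurable X) (hY : FiberMeasurable Y) (g : T → T') :
    condH μ X Y ≤ condH μ X (fun ω => g (Y ω)) := by
  have h := CMI_nonneg μ hX hY fun ω => g (Y ω)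
  rwa [CMI_eq_condH_sub_condH μ hX hY (hY.comp g), sub_nonneg,
    condH_comp_of_injective μ X Y fun a b (h : (a, g a) = (b, g b)) => congrArg Prod.fst h] at h

end

theorem MI_prodMk_comp_eq_H_of_optimal {SV ST AS AX : Type*} [Fintype SV] [Fintype ST]
    [Fintype AS] [Fintype AX] (μ : Measure Ω) [IsFiniteMeasure μ] {V : Ω → SV} {T : Ω → ST}
    (hV : FiberMeasurable V) (hT : FiberMeasurable T) (fS : SV → AS) (fX : SV → AX)
    (hinv : MI μ T (fun ω => fS (V ω)) = MI μ V T)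
    (hexcl : CMI μ V (fun ω => fX (V ω)) T = condH μ V T) :
    MI μ V (fun ω => (fS (V ω), fX (V ω))) = H μ V := by
  have hF : FiberMeasurable fun ω => (fS (V ω), fX (V ω)) := hV.comp fun v => (fS v, fX v)
  have hTS : condH μ T (fun ω => fS (V ω)) = condH μ T V := by
    rw [MI_comm μ V T, MI_eq_H_sub_condH μ hT (hV.comp fS), MI_eq_H_sub_condH μ hT hV] at hinv
    linarith
  have hVXT : condH μ V (fun ω => (fX (V ω), T ω)) = 0 := by
    rw [CMI_eq_condH_sub_condH μ hV (hV.comp fX) hT] at hexcl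
    linarith
  have hTF : condH μ T (fun ω => (fS (V ω), fX (V ω))) ≤ condH μ T (fun ω => fS (V ω)) :=
    condH_le_condH_comp μ hT hF Prod.fst
  have hCMI : CMI μ V T (fun ω => (fS (V ω), fX (V ω))) ≤ 0 := by
    rw [CMI_comm, CMI_eq_condH_sub_condH μ hT hV hF, condH_comp_of_injective μ T V
      fun a b (h : (a, fS a, fX a) = (b, fS b, fX b)) => congrArg Prod.fst h]
    linarith
  have hVTF : condH μ V (fun ω => (T ω, fS (V ω), fX (V ω))) ≤ 0 :=
    hVXT ▸ condH_le_condH_comp μ hV (hT.prodMk hF) fun p => (p.2.2, p.1)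
  rw [CMI_eq_condH_sub_condH μ hV hT hF] at hCMI
  rw [MI_eq_H_sub_condH μ hV hF, le_antisymm (by linarith) (condH_nonneg μ V _), sub_zero]

theorem completeness_of_optimal_representations_general
    {SV ST AS AX BS BX : Type*}
    [Fintype SV] [MeasurableSpace SV] [MeasurableSingletonClass SV]
    [Fintype ST] [MeasurableSpace ST] [MeasurableSingletonClass ST]
    [Fintype AS] [Fintype AX]
    [Fintype BS] [Fintype BX]
    (μ : Measure Ω) [IsProbabilityMeasure μ]
    (V : Ω → SV) (T : Ω → ST)
    (hV : Measurable V) (hT : Measurable T)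
    (fS : SV → AS) (fX : SV → AX) (gS : ST → BS) (gX : ST → BX)
    (hVS_inv : MI μ T (fun ω => fS (V ω)) = MI μ V T)
    (hVX_max : CMI μ V (fun ω => fX (V ω)) T = condH μ V T)
    (hTS_inv : MI μ V (fun ω => gS (T ω)) = MI μ V T)
    (hTX_max : CMI μ T (fun ω => gX (T ω)) V = condH μ T V) :
    MI μ V (fun ω => (fS (V ω), fX (V ω))) = H μ V ∧
      MI μ T (fun ω => (gS (T ω), gX (T ω))) = H μ T := by
  have hV' := fiberMeasurable_of_measurable hV
  have hT' := fiberMeasurable_of_measurable hT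
  exact ⟨MI_prodMk_comp_eq_H_of_optimal μ hV' hT' fS fX hVS_inv hVX_max,
    MI_prodMk_comp_eq_H_of_optimal μ hT' hV' gS gX (hTS_inv.trans (MI_comm μ V T)) hTX_max⟩

/-- **Completeness.** If `V_S = f_S(V)`, `V_X = f_X(V)`, `T_S = g_S(T)`,
`T_X = g_X(T)` satisfy the optimality conditions, then the joint representations
`F_V = (V_S, V_X)` and `F_T = (T_S, T_X)` are sufficient:
`I(V; F_V) = H(V)` and `I(T; F_T) = H(T)`. -/
theorem completeness_of_optimal_representations
    {SV ST AS AX BS BX : Type*}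
    [Fintype SV] [Nonempty SV] [MeasurableSpace SV] [MeasurableSingletonClass SV]
    [Fintype ST] [Nonempty ST] [MeasurableSpace ST] [MeasurableSingletonClass ST]
    [Fintype AS] [Nonempty AS] [Fintype AX] [Nonempty AX]
    [Fintype BS] [Nonempty BS] [Fintype BX] [Nonempty BX]
    (μ : Measure Ω) [IsProbabilityMeasure μ]
    (V : Ω → SV) (T : Ω → ST)
    (hV : Measurable V) (hT : Measurable T)
    (fS : SV → AS) (fX : SV → AX) (gS : ST → BS) (gX : ST → BX)
    (hVS_inv : MI μ T (fun ω => fS (V ω)) = MI μ V T)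
    (hVS_min : CMI μ V (fun ω => fS (V ω)) T = 0)
    (hVX_max : CMI μ V (fun ω => fX (V ω)) T = condH μ V T)
    (hVX_min : MI μ T (fun ω => fX (V ω)) = 0)
    (hTS_inv : MI μ V (fun ω => gS (T ω)) = MI μ V T)
    (hTS_min : CMI μ T (fun ω => gS (T ω)) V = 0)
    (hTX_max : CMI μ T (fun ω => gX (T ω)) V = condH μ T V)
    (hTX_min : MI μ V (fun ω => gX (T ω)) = 0) :
    MI μ V (fun ω => (fS (V ω), fX (V ω))) = H μ V ∧
      MI μ T (fun ω => (gS (T ω), gX (T ω))) = H μ T :=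
  completeness_of_optimal_representations_general μ V T hV hT fS fX gS gX hVS_inv hVX_max hTS_inv
    hTX_max

end DisNCL
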